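/- Balancing property of optimal fractional decompositions: for every α ∈ ℳ₁(𝕋) there exist α₁, α₂, α₃ ∈ ℳ_b(𝕋) with α₁+α₂+α₃ = α and Φ(α) = φ(α₁,α₂,α₃); moreover, whenever α₁, α₂, α₃ ∈ ℳ_b(𝕋) satisfy α₁+α₂+α₃ = α and Φ(α) = φ(α₁,α₂,α₃), one has α₁(c₁) = α₂(c₂) = α₃(c₃). -/

import Mathlib

open MeasureTheory Filter Asymptotics

noncomputable section

namespace LoadOpt

/-- `j = e^{2iπ/3}`, primitive cube root of unity. -/
def jc : ℂ := Complex.exp (2 * Real.pi * Complex.I / 3)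

/-- `λ = 2 (3√3)^{-1/2}`. -/
def lam : ℝ := 2 / Real.sqrt (3 * Real.sqrt 3)

/-- The bins `B₁, B₂, B₃` (indexed by `0, 1, 2`). -/
def Bin : Fin 3 → ℂ := ![jc ^ 2 * (lam * Complex.I), (lam : ℂ) * Complex.I, jc * (lam * Complex.I)]

/-- The triangle `𝕋`, convex hull of the three bins. -/
def Tri : Set ℂ := convexHull ℝ {Bin 0, Bin 1, Bin 2}

/-- Cost functions `c₁, c₂, c₃` (indexed by `0, 1, 2`). -/
def costs (c : ℂ → ℝ) : Fin 3 → ℂ → ℝ := ![c, fun x => c (jc ^ 2 * x), fun x => c (jc * x)]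

/-- Half-lines removed to make the Voronoi cells a partition: `D₁ = {ijt : t < 0}`,
`D_l = {ij^l t : t ≤ 0}` for `l = 2, 3`. -/
def Dl : Fin 3 → Set ℂ :=
  ![{z | ∃ t : ℝ, t < 0 ∧ z = Complex.I * jc * t},
    {z | ∃ t : ℝ, t ≤ 0 ∧ z = Complex.I * jc ^ 2 * t},
    {z | ∃ t : ℝ, t ≤ 0 ∧ z = Complex.I * jc ^ 3 * t}]

/-- The Voronoi cells `𝕋₁, 𝕋₂, 𝕋₃` (indexed by `0, 1, 2`). -/
def cell (l : Fin 3) : Set ℂ :=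
  {x ∈ Tri | dist x (Bin l) = ⨅ m : Fin 3, dist x (Bin m)} \ Dl l

/-- The load `ρₙ(A)` of the allocation `A` of the points `x 0, …, x (n-1)`. -/
def load (c : ℂ → ℝ) {n : ℕ} (x : Fin n → ℂ) (A : Fin n → Fin 3) : ℝ :=
  Finset.univ.sup' Finset.univ_nonempty fun l => ∑ k, if A k = l then costs c l (x k) else 0

/-- The optimal load `ρₙ`. -/
def optLoad (c : ℂ → ℝ) {n : ℕ} (x : Fin n → ℂ) : ℝ :=
  Finset.univ.inf' Finset.univ_nonempty fun A : Fin n → Fin 3 => load c x A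

/-- The suboptimal load `ρ̄ₙ`, allocating each point to the bin of its Voronoi cell. -/
def subLoad (c : ℂ → ℝ) {n : ℕ} (x : Fin n → ℂ) : ℝ :=
  Finset.univ.sup' Finset.univ_nonempty fun l => ∑ k, (cell l).indicator (costs c l) (x k)

/-- `γ = ∫_{𝕋₁} c`. -/
def gamma (c : ℂ → ℝ) : ℝ := ∫ x in cell 0, c x

/-- Assumption (C1). -/
def C1 (c : ℂ → ℝ) : Prop :=
  ∀ x ∈ Tri, ∀ l : Fin 3, l ≠ 0 → dist x (Bin 0) < dist x (Bin l) → costs c 0 x < costs c l x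

/-- Assumption (C2): symmetry of `c` w.r.t. the line through `0` and `B₁`, plus a Lipschitz
property near `D₁ ∪ D₃`. -/
def C2 (c : ℂ → ℝ) : Prop :=
  (∀ θ ∈ Set.Icc (0 : ℝ) (2 * Real.pi), ∀ t : ℝ, 0 < t →
      (t : ℂ) * Complex.exp ((θ : ℂ) * Complex.I) ∈ Tri →
      c ((t : ℂ) * Complex.exp ((θ : ℂ) * Complex.I))
        = c ((t : ℂ) * Complex.exp (((-θ - Real.pi / 3 : ℝ) : ℂ) * Complex.I))) ∧
  ∃ (K : NNReal) (U : Set ℂ), IsOpen U ∧ Dl 0 ∪ Dl 2 ⊆ U ∧ LipschitzOnWith K c U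

/-- `φ(β₀,β₁,β₂) = max (β₀(c₁), β₁(c₂), β₂(c₃))`. -/
def phiVal (c : ℂ → ℝ) (β : Fin 3 → Measure ℂ) : ℝ :=
  max (max (∫ x, costs c 0 x ∂(β 0)) (∫ x, costs c 1 x ∂(β 1))) (∫ x, costs c 2 x ∂(β 2))

/-- Decompositions of `α` into three measures on `𝕋` of mass at most one. -/
def decomps (α : Measure ℂ) : Set (Fin 3 → Measure ℂ) :=
  {β | (∀ l, β l Set.univ ≤ 1) ∧ (∀ l, β l Triᶜ = 0) ∧ β 0 + β 1 + β 2 = α}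

/-- `Φ(α) = inf {φ(β₀,β₁,β₂) : β₀ + β₁ + β₂ = α}`. -/
def Phi (c : ℂ → ℝ) (α : Measure ℂ) : ℝ := sInf (phiVal c '' decomps α)

/-- `Ψ(α) = φ(α|_{𝕋₁}, α|_{𝕋₂}, α|_{𝕋₃})`. -/
def Psi (c : ℂ → ℝ) (α : Measure ℂ) : ℝ :=
  max (max (∫ x in cell 0, costs c 0 x ∂α) (∫ x in cell 1, costs c 1 x ∂α))
    (∫ x in cell 2, costs c 2 x ∂α)

/-- The relative entropy `H(α | ν)`, equal to `∫ (dα/dν) log (dα/dν) dν` if `α ≪ ν` (with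
value `+∞` if the integral does not exist) and `+∞` otherwise. -/
def relEntropy (α ν : Measure ℂ) : EReal :=
  open scoped Classical in
  if α ≪ ν ∧ Integrable (llr α ν) α then ((∫ x, llr α ν x ∂α : ℝ) : EReal) else ⊤

/-!
Decompositions `α = β₁ + β₂ + β₃` correspond to triples of positive functionals on `L²(α)`
summing to `∫ · dα` (Riesz representation turns such functionals back into densities), and these
triples form a weak-* compact set by Banach–Alaoglu. Hence the set of achievable cost vectors
`(β₁(c₁), β₂(c₂), β₃(c₃))` is a compact convex subset of `ℝ³`, so the infimum `Φ(α)` of their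
maximum is attained. If an optimal decomposition had some `βₘ(cₘ) < Φ(α)`, moving a small
fraction `t` of all the mass to the `m`-th bin, i.e. passing to `(1 - t) β + t α eₘ`, would
lower every coordinate below `Φ(α)`.
-/

end LoadOpt

open Topology
open scoped ENNReal RealInnerProductSpace

theorem Convex.apply_eq_of_minimal {ι : Type*} {S : Set (ι → ℝ)} (hS : Convex ℝ S)
    (hsingle : ∀ m, ∃ w ∈ S, ∀ l ≠ m, w l = 0) {v : ι → ℝ} (hv : v ∈ S) (hv0 : 0 ≤ v)
    {M : ℝ} (hvM : ∀ l, v l ≤ M) (hmin : ∀ u ∈ S, ∃ l, M ≤ u l) (m : ι) : v m = M := by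
  by_contra hne
  have hlt : v m < M := (hvM m).lt_of_ne hne
  have hM : 0 < M := (hv0 m).trans_lt hlt
  obtain ⟨w, hw, hw0⟩ := hsingle m
  have hcont : Tendsto (fun t : ℝ => (1 - t) * v m + t * w m) (𝓝[>] 0) (𝓝 (v m)) := by
    have h : Continuous fun t : ℝ => (1 - t) * v m + t * w m := by fun_prop
    exact (h.tendsto' 0 _ (by simp)).mono_left nhdsWithin_le_nhds
  obtain ⟨t, htm, ht0, ht1⟩ := ((hcont.eventually (gt_mem_nhds hlt)).and
    (Ioo_mem_nhdsGT one_pos)).exists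
  obtain ⟨l, hl⟩ := hmin _ (hS hv hw (by linarith) ht0.le (sub_add_cancel 1 t))
  simp only [Pi.add_apply, Pi.smul_apply, smul_eq_mul] at hl
  by_cases hlm : l = m
  · subst hlm; linarith
  · rw [hw0 l hlm, mul_zero, add_zero] at hl
    nlinarith [hvM l]

theorem abs_apply_le_apply_abs {E F : Type*} [AddCommGroup E] [Lattice E] [IsOrderedAddMonoid E]
    [FunLike F E ℝ] [AddMonoidHomClass F E ℝ] {Λ : F} (hΛ : ∀ f, 0 ≤ f → 0 ≤ Λ f) (f : E) :
    |Λ f| ≤ Λ |f| := by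
  have h₁ := hΛ _ (sub_nonneg.mpr (le_abs_self f))
  have h₂ := hΛ _ (neg_le_iff_add_nonneg.mp (neg_le_abs f))
  rw [map_sub] at h₁
  rw [map_add] at h₂
  exact abs_le.mpr ⟨by linarith, by linarith⟩

namespace MeasureTheory

variable {X ι : Type*} [MeasurableSpace X] [Fintype ι]

def splittings (α : Measure X) : Set (ι → Measure X) := {β | ∑ l, β l = α}

def integralVector (g : ι → X → ℝ) (β : ι → Measure X) : ι → ℝ := fun l => ∫ x, g l x ∂(β l)

variable {α : Measure X}

theorem le_of_mem_splittings {β : ι → Measure X} (hβ : β ∈ splittings α) (l : ι) : β l ≤ α :=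
  hβ ▸ Finset.single_le_sum (fun _ _ => Measure.zero_le _) (Finset.mem_univ l)

theorem single_mem_splittings [DecidableEq ι] (m : ι) : Pi.single m α ∈ splittings (ι := ι) α :=
  Finset.sum_pi_single' m α Finset.univ |>.trans (if_pos (Finset.mem_univ m))

theorem convex_integralVector_image [IsFiniteMeasure α] {g : ι → X → ℝ}
    (hg : ∀ l, Integrable (g l) α) : Convex ℝ (integralVector g '' splittings α) := by
  rintro _ ⟨β, hβ, rfl⟩ _ ⟨β', hβ', rfl⟩ a b ha hb hab
  refine ⟨fun l => ENNReal.ofReal a • β l + ENNReal.ofReal b • β' l, ?_, funext fun l => ?_⟩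
  · change ∑ l, _ = α
    simp only [Finset.sum_add_distrib, ← Finset.smul_sum,
      hβ.out, hβ'.out, ← add_smul, ← ENNReal.ofReal_add ha hb, hab, ENNReal.ofReal_one, one_smul]
  · have hint : ∀ γ : ι → Measure X, γ ∈ splittings α → ∀ c : ℝ,
        Integrable (g l) (ENNReal.ofReal c • γ l) := fun γ hγ c =>
      ((hg l).mono_measure (le_of_mem_splittings hγ l)).smul_measure ENNReal.ofReal_ne_top
    simp only [integralVector, Pi.add_apply, Pi.smul_apply, smul_eq_mul,
      integral_add_measure (hint β hβ a) (hint β' hβ' b), integral_smul_measure,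
      ENNReal.toReal_ofReal ha, ENNReal.toReal_ofReal hb]


theorem integral_toLp_of_le {μ : Measure X} {g : X → ℝ} (hμ : μ ≤ α) (hg : MemLp g 2 α) :
    ∫ x, hg.toLp g x ∂μ = ∫ x, g x ∂μ :=
  integral_congr_ae ((Measure.absolutelyContinuous_of_le hμ).ae_eq hg.coeFn_toLp)

namespace L2

theorem ae_nonneg_of_forall_inner_nonneg [SigmaFinite α] {g : Lp ℝ 2 α}
    (hg : ∀ f : Lp ℝ 2 α, 0 ≤ f → 0 ≤ ⟪g, f⟫) : 0 ≤ᵐ[α] g := by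
  refine ae_nonneg_of_forall_setIntegral_nonneg_of_sigmaFinite
    (fun s _ hs => integrableOn_Lp_of_measure_ne_top g one_le_two hs.ne) fun s hs hμs => ?_
  rw [← L2.inner_indicatorConstLp_one hs hμs.ne, real_inner_comm]
  refine hg _ ((Lp.coeFn_nonneg _).mp ?_)
  filter_upwards [indicatorConstLp_coeFn (p := 2) (hs := hs) (hμs := hμs.ne) (c := (1 : ℝ))]
    with x hx
  rw [hx]
  exact Set.indicator_nonneg (fun _ _ => zero_le_one) x

variable [IsFiniteMeasure α]

theorem inner_const_one (f : Lp ℝ 2 α) : ⟪Lp.const 2 α (1 : ℝ), f⟫ = ∫ x, f x ∂α := by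
  rw [← indicatorConstLp_univ, L2.inner_indicatorConstLp_one, Measure.restrict_univ]

theorem integral_abs_le (f : Lp ℝ 2 α) :
    ∫ x, (|f| : Lp ℝ 2 α) x ∂α ≤ ‖Lp.const 2 α (1 : ℝ)‖ * ‖f‖ := by
  rw [← inner_const_one, ← norm_abs_eq_norm f]
  exact real_inner_le_norm _ _

theorem integrable_of_le {μ : Measure X} (hμ : μ ≤ α) (f : Lp ℝ 2 α) : Integrable f μ :=
  ((Lp.memLp f).integrable one_le_two).mono_measure hμ

def integralCLMOfLE {μ : Measure X} (hμ : μ ≤ α) : Lp ℝ 2 α →L[ℝ] ℝ :=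
  LinearMap.mkContinuous
    { toFun := fun f => ∫ x, f x ∂μ
      map_add' := fun f g => by
        rw [integral_congr_ae ((Measure.absolutelyContinuous_of_le hμ).ae_eq (Lp.coeFn_add f g))]
        exact integral_add (integrable_of_le hμ f) (integrable_of_le hμ g)
      map_smul' := fun r f => by
        rw [integral_congr_ae ((Measure.absolutelyContinuous_of_le hμ).ae_eq (Lp.coeFn_smul r f))]
        exact integral_smul r _ }
    ‖Lp.const 2 α (1 : ℝ)‖ fun f => calc
      ‖∫ x, f x ∂μ‖ ≤ ∫ x, ‖f x‖ ∂μ := norm_integral_le_integral_norm _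
      _ ≤ ∫ x, ‖f x‖ ∂α :=
        integral_mono_measure hμ (.of_forall fun _ => norm_nonneg _)
          ((Lp.memLp f).integrable one_le_two).norm
      _ = ∫ x, (|f| : Lp ℝ 2 α) x ∂α :=
        integral_congr_ae ((Lp.coeFn_abs f).mono fun _ hx => hx.symm)
      _ ≤ _ := integral_abs_le f

end L2

def positiveSplittings (α : Measure X) (ι : Type*) [Fintype ι] : Set (ι → WeakDual ℝ (Lp ℝ 2 α)) :=
  {Λ | (∀ l f, 0 ≤ f → 0 ≤ Λ l f) ∧ ∀ f, ∑ l, Λ l f = ∫ x, f x ∂α}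

theorem isClosed_positiveSplittings : IsClosed (positiveSplittings α ι) := by
  have hev : ∀ l (f : Lp ℝ 2 α), Continuous fun Λ : ι → WeakDual ℝ (Lp ℝ 2 α) => Λ l f :=
    fun l f => (WeakDual.eval_continuous f).comp (continuous_apply l)
  simp only [positiveSplittings, Set.ofPred_and, Set.ofPred_forall]
  exact (isClosed_iInter fun l => isClosed_iInter fun f => isClosed_iInter fun _ =>
    isClosed_le continuous_const (hev l f)).inter (isClosed_iInter fun f =>
      isClosed_eq (continuous_finsetSum _ fun l _ => hev l f) continuous_const)

variable [IsFiniteMeasure α]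

theorem norm_le_of_mem_positiveSplittings {Λ : ι → WeakDual ℝ (Lp ℝ 2 α)}
    (hΛ : Λ ∈ positiveSplittings α ι) (l : ι) :
    ‖WeakDual.toStrongDual (Λ l)‖ ≤ ‖Lp.const 2 α (1 : ℝ)‖ :=
  ContinuousLinearMap.opNorm_le_bound _ (norm_nonneg _) fun f => calc
    ‖Λ l f‖ ≤ Λ l |f| := abs_apply_le_apply_abs (hΛ.1 l) f
    _ ≤ ∑ m, Λ m |f| :=
      Finset.single_le_sum (fun m _ => hΛ.1 m _ (abs_nonneg f)) (Finset.mem_univ l)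
    _ ≤ _ := (hΛ.2 |f|).trans_le (L2.integral_abs_le f)

theorem isCompact_positiveSplittings : IsCompact (positiveSplittings α ι) :=
  (isCompact_univ_pi fun _ => WeakDual.isCompact_closedBall 0 ‖Lp.const 2 α (1 : ℝ)‖)
    |>.of_isClosed_subset isClosed_positiveSplittings fun Λ hΛ l _ => by
      simpa using norm_le_of_mem_positiveSplittings hΛ l

theorem exists_mem_positiveSplittings {β : ι → Measure X} (hβ : β ∈ splittings α) :
    ∃ Λ ∈ positiveSplittings α ι, ∀ l f, Λ l f = ∫ x, f x ∂(β l) := by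
  refine ⟨fun l => StrongDual.toWeakDual (L2.integralCLMOfLE (le_of_mem_splittings hβ l)),
    ⟨fun l f hf => ?_, fun f => ?_⟩, fun l f => rfl⟩
  · exact integral_nonneg_of_ae <| (Measure.absolutelyContinuous_of_le
      (le_of_mem_splittings hβ l)).ae_le ((Lp.coeFn_nonneg f).mpr hf)
  · change ∑ l, ∫ x, f x ∂(β l) = ∫ x, f x ∂α
    rw [← integral_finsetSum_measure fun l _ => L2.integrable_of_le (le_of_mem_splittings hβ l) f,
      hβ.out]

theorem exists_mem_splittings {Λ : ι → WeakDual ℝ (Lp ℝ 2 α)} (hΛ : Λ ∈ positiveSplittings α ι) :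
    ∃ β ∈ splittings α, ∀ l f, ∫ x, f x ∂(β l) = Λ l f := by
  set D : ι → Lp ℝ 2 α := fun l =>
    (InnerProductSpace.toDual ℝ (Lp ℝ 2 α)).symm (WeakDual.toStrongDual (Λ l))
  have hD : ∀ l f, ⟪D l, f⟫ = Λ l f := fun l f => InnerProductSpace.toDual_symm_apply
  have hD_nonneg : ∀ l, 0 ≤ᵐ[α] D l := fun l =>
    L2.ae_nonneg_of_forall_inner_nonneg fun f hf => (hD l f).symm ▸ hΛ.1 l f hf
  have hD_sum : ∑ l, D l = Lp.const 2 α (1 : ℝ) := ext_inner_right ℝ fun f => by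
    rw [sum_inner, L2.inner_const_one, ← hΛ.2 f]
    exact Finset.sum_congr rfl fun l _ => hD l f
  have hD_sum_ae : ∀ᵐ x ∂α, ∑ l, D l x = 1 := by
    have hconst := Lp.coeFn_const (p := 2) (μ := α) (1 : ℝ)
    rw [← hD_sum] at hconst
    filter_upwards [Lp.coeFn_fun_finsetSum Finset.univ D, hconst] with x h₁ h₂
    rw [← h₁, h₂]
    rfl
  refine ⟨fun l => α.withDensity fun x => ENNReal.ofReal (D l x), ?_, fun l f => ?_⟩
  · have hmeas : ∀ l, Measurable fun x => ENNReal.ofReal (D l x) := fun l =>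
      (Lp.stronglyMeasurable (D l)).measurable.ennreal_ofReal
    change ∑ l, _ = α
    rw [← Measure.sum_fintype, ← withDensity_tsum hmeas]
    refine (withDensity_congr_ae (g := 1) ?_).trans withDensity_one
    filter_upwards [hD_sum_ae, ae_all_iff.mpr hD_nonneg] with x h₁ h₂
    rw [tsum_fintype, Finset.sum_apply, ← ENNReal.ofReal_sum_of_nonneg fun l _ => h₂ l, h₁,
      ENNReal.ofReal_one, Pi.one_apply]
  · rw [← hD, L2.inner_def, integral_withDensity_eq_integral_toReal_smul₀
      (Lp.stronglyMeasurable (D l)).measurable.ennreal_ofReal.aemeasurable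
      (.of_forall fun _ => ENNReal.ofReal_lt_top)]
    refine integral_congr_ae ?_
    filter_upwards [hD_nonneg l] with x hx
    rw [ENNReal.toReal_ofReal hx, smul_eq_mul, Real.inner_apply]

theorem isCompact_integralVector_image {g : ι → X → ℝ} (hg : ∀ l, MemLp (g l) 2 α) :
    IsCompact (integralVector g '' splittings α) := by
  have himage : integralVector g '' splittings α =
      (fun Λ l => Λ l ((hg l).toLp (g l))) '' positiveSplittings α ι := by
    ext v
    constructor
    · rintro ⟨β, hβ, rfl⟩
      obtain ⟨Λ, hΛ, hΛβ⟩ := exists_mem_positiveSplittings hβ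
      exact ⟨Λ, hΛ, funext fun l =>
        (hΛβ l _).trans (integral_toLp_of_le (le_of_mem_splittings hβ l) (hg l))⟩
    · rintro ⟨Λ, hΛ, rfl⟩
      obtain ⟨β, hβ, hβΛ⟩ := exists_mem_splittings hΛ
      exact ⟨β, hβ, funext fun l =>
        (integral_toLp_of_le (le_of_mem_splittings hβ l) (hg l)).symm.trans (hβΛ l _)⟩
  rw [himage]
  exact isCompact_positiveSplittings.image <|
    continuous_pi fun l => (WeakDual.eval_continuous _).comp (continuous_apply l)

end MeasureTheory

namespace LoadOpt

lemma jc_pow_three : jc ^ 3 = 1 := by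
  rw [jc, ← Complex.exp_nat_mul]
  rw [show (3 : ℕ) * (2 * Real.pi * Complex.I / 3) = 2 * Real.pi * Complex.I by push_cast; ring]
  exact Complex.exp_two_pi_mul_I

lemma jc_mul_mem_Tri {x : ℂ} (hx : x ∈ Tri) : jc * x ∈ Tri := by
  have hBin : (LinearMap.mulLeft ℝ jc) '' {Bin 0, Bin 1, Bin 2} ⊆ {Bin 0, Bin 1, Bin 2} := by
    have h₀ : jc * Bin 0 = Bin 1 := by simp [Bin, ← mul_assoc, ← pow_succ', jc_pow_three]
    have h₁ : jc * Bin 1 = Bin 2 := by simp [Bin]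
    have h₂ : jc * Bin 2 = Bin 0 := by simp [Bin, ← mul_assoc, ← sq]
    simp only [Set.image_insert_eq, Set.image_singleton, LinearMap.mulLeft_apply, h₀, h₁, h₂]
    intro y hy
    rcases hy with h | h | h <;> simp_all
  refine convexHull_mono hBin ?_
  rw [← (LinearMap.mulLeft ℝ jc).image_convexHull]
  exact ⟨x, hx, rfl⟩

lemma jc_sq_mul_mem_Tri {x : ℂ} (hx : x ∈ Tri) : jc ^ 2 * x ∈ Tri := by
  simpa [sq, mul_assoc] using jc_mul_mem_Tri (jc_mul_mem_Tri hx)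

variable {c : ℂ → ℝ}

lemma measurable_costs (hc : Measurable c) (l : Fin 3) : Measurable (costs c l) := by
  fin_cases l
  exacts [hc, hc.comp (measurable_const_mul _), hc.comp (measurable_const_mul _)]

lemma costs_nonneg (hc : ∀ x, 0 ≤ c x) (l : Fin 3) (x : ℂ) : 0 ≤ costs c l x := by
  fin_cases l <;> simp [costs, hc]

lemma bddAbove_costs_image (hc : BddAbove (c '' Tri)) (l : Fin 3) :
    BddAbove (costs c l '' Tri) := by
  refine hc.mono ?_
  rintro _ ⟨x, hx, rfl⟩
  fin_cases l
  exacts [⟨x, hx, rfl⟩, ⟨_, jc_sq_mul_mem_Tri hx, rfl⟩, ⟨_, jc_mul_mem_Tri hx, rfl⟩]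

lemma memLp_costs (hc_meas : Measurable c) (hc_nonneg : ∀ x, 0 ≤ c x)
    (hc_bdd : BddAbove (c '' Tri)) {α : Measure ℂ} [IsFiniteMeasure α] (hαT : α Triᶜ = 0)
    (l : Fin 3) : MemLp (costs c l) 2 α := by
  obtain ⟨B, hB⟩ := bddAbove_costs_image hc_bdd l
  refine MemLp.of_bound (measurable_costs hc_meas l).aestronglyMeasurable B ?_
  filter_upwards [compl_mem_ae_iff.mpr hαT] with x hx
  rw [Real.norm_of_nonneg (costs_nonneg hc_nonneg l x)]
  exact hB ⟨x, not_not.mp hx, rfl⟩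

lemma integralVector_le_phiVal (β : Fin 3 → Measure ℂ) (l : Fin 3) :
    integralVector (costs c) β l ≤ phiVal c β := by
  fin_cases l <;> simp [integralVector, phiVal]

lemma decomps_eq_splittings {α : Measure ℂ} [IsProbabilityMeasure α] (hαT : α Triᶜ = 0) :
    decomps α = splittings α := by
  ext β
  have hsum : β ∈ splittings α ↔ β 0 + β 1 + β 2 = α := by
    rw [splittings, Set.mem_ofPred_eq, Fin.sum_univ_three]
  refine ⟨fun h => hsum.mpr h.2.2, fun h => ⟨fun l => ?_, fun l => ?_, hsum.mp h⟩⟩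
  · exact (le_of_mem_splittings h l Set.univ).trans_eq measure_univ
  · exact nonpos_iff_eq_zero.mp ((le_of_mem_splittings h l Triᶜ).trans_eq hαT)

/-- **Balancing property of optimal fractional decompositions** (Lemma 2.2 (i)): every
`α ∈ ℳ₁(𝕋)` admits a decomposition `α = α₁ + α₂ + α₃` with `Φ(α) = φ(α₁,α₂,α₃)`, and any
such optimal decomposition satisfies `α₁(c₁) = α₂(c₂) = α₃(c₃)`. -/
theorem optimal_decomposition_balanced
    (c : ℂ → ℝ) (hc_meas : Measurable c) (hc_nonneg : ∀ x, 0 ≤ c x)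
    (hc_bdd : BddAbove (c '' Tri)) :
    ∀ α : Measure ℂ, IsProbabilityMeasure α → α Triᶜ = 0 →
      (∃ β ∈ decomps α, Phi c α = phiVal c β) ∧
      ∀ β ∈ decomps α, Phi c α = phiVal c β →
        (∫ x, costs c 0 x ∂(β 0)) = (∫ x, costs c 1 x ∂(β 1)) ∧
        (∫ x, costs c 1 x ∂(β 1)) = (∫ x, costs c 2 x ∂(β 2)) := by
  intro α hα hαT
  set F : (Fin 3 → ℝ) → ℝ := fun v => max (max (v 0) (v 1)) (v 2)
  set S := integralVector (costs c) '' splittings α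
  have hF : Continuous F := by fun_prop
  have hdecomps := decomps_eq_splittings hαT
  have hPhi : Phi c α = sInf (F '' S) := by rw [Phi, hdecomps, Set.image_image]; rfl
  have hmemLp := memLp_costs hc_meas hc_nonneg hc_bdd hαT
  have hS : IsCompact S := isCompact_integralVector_image hmemLp
  refine ⟨?_, fun β hβ hopt => ?_⟩
  · obtain ⟨_, ⟨β, hβ, rfl⟩, hβmin⟩ := (hS.image hF).sInf_mem
      (Set.image_nonempty.mpr ⟨_, Pi.single 0 α, single_mem_splittings 0, rfl⟩)
    exact ⟨β, hdecomps ▸ hβ, hPhi.trans hβmin.symm⟩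
  have hmin : ∀ u ∈ S, ∃ l, phiVal c β ≤ u l := fun u hu => by
    have h : phiVal c β ≤ F u :=
      hopt ▸ hPhi ▸ csInf_le (hS.image hF).bddBelow (Set.mem_image_of_mem F hu)
    simp only [F, le_max_iff] at h
    rcases h with (h | h) | h
    exacts [⟨0, h⟩, ⟨1, h⟩, ⟨2, h⟩]
  have hbal := (convex_integralVector_image fun l =>
      (hmemLp l).integrable one_le_two).apply_eq_of_minimal
    (fun m => ⟨_, ⟨Pi.single m α, single_mem_splittings m, rfl⟩,
      fun l hl => by simp [integralVector, hl]⟩)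
    ⟨β, hdecomps ▸ hβ, rfl⟩ (fun l => integral_nonneg (costs_nonneg hc_nonneg l))
    (integralVector_le_phiVal β) hmin
  exact ⟨(hbal 0).trans (hbal 1).symm, (hbal 1).trans (hbal 2).symm⟩

end LoadOpt
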